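/- arXiv:1109.1916 — 6 statements merged into one kernel-verified Lean document; each statement's English description precedes it below -/
import Mathlib

section
/- If a finite matrix group G ⊆ GL_n(F) (F algebraically closed of characteristic 0) has submultiplicative spectrum, then for every k ≥ 1 the set of elements of G whose order divides p^k is a subgroup of G; i.e., the set Δ_k(G) = {g ∈ G : g^{p^k} = 1} equals the subgroup Ω_k(G) it generates. -/
/-!
Eigenvalues of an element of order dividing `N` are `N`-th roots of unity, so by submultiplicativity
every eigenvalue of `AB` is one as well when `A ^ N = B ^ N = 1`. In characteristic zero an element
of finite order is diagonalizable, hence `(AB) ^ N = 1`. Thus `Δ_k(G)` is closed under products and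
coincides with the subgroup it generates.
-/

open Pointwise Polynomial

theorem spectrum.pow_eq_one_of_pow_eq_one {K A : Type*} [Field K] [Ring A] [Algebra K A]
    {a : A} {N : ℕ} (ha : a ^ N = 1) {μ : K} (hμ : μ ∈ spectrum K a) : μ ^ N = 1 := by
  cases subsingleton_or_nontrivial A
  · simp [spectrum.of_subsingleton] at hμ
  simpa [ha, spectrum.one_eq] using spectrum.pow_mem_pow a N hμ

/-- `(m : K) ≠ 0` makes the minimal polynomial of `M` separable, so it divides `X ^ N - 1` as soon
as its roots, which are eigenvalues of `M`, are `N`-th roots of unity. -/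
theorem Matrix.pow_eq_one_of_forall_mem_spectrum {K ι : Type*} [Field K] [IsAlgClosed K]
    [Fintype ι] [DecidableEq ι] {M : Matrix ι ι K} {m N : ℕ} (hm : M ^ m = 1)
    (hmK : (m : K) ≠ 0)
    (hN : ∀ μ ∈ spectrum K M, μ ^ N = 1) : M ^ N = 1 := by
  rcases N.eq_zero_or_pos with rfl | hN0
  · exact pow_zero M
  have hsep : (minpoly K M).Separable :=
    (separable_X_pow_sub_C 1 hmK one_ne_zero).of_dvd (minpoly.dvd K M (by simp [hm]))
  have hroots : (minpoly K M).roots ≤ (X ^ N - C 1 : K[X]).roots := by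
    rw [Multiset.le_iff_subset (nodup_roots hsep)]
    intro μ hμ
    have hμM : μ ∈ spectrum K M := Matrix.mem_spectrum_iff_isRoot_charpoly.2
      ((isRoot_of_mem_roots hμ).dvd (Matrix.minpoly_dvd_charpoly M))
    rw [mem_roots (X_pow_sub_C_ne_zero hN0 1)]
    simp [hN μ hμM]
  have hdvd := (IsAlgClosed.splits _).dvd_of_roots_le_roots
    (minpoly.ne_zero (Algebra.IsIntegral.isIntegral M)) hroots
  simpa [sub_eq_zero] using minpoly.dvd_iff.1 hdvd

theorem Matrix.GeneralLinearGroup.mul_pow_eq_one_of_spectrum_mul_subset {K ι : Type*} [Field K]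
    [IsAlgClosed K] [CharZero K] [Fintype ι] [DecidableEq ι] {A B : GL ι K} {N : ℕ}
    (hS : spectrum K ((A * B : GL ι K) : Matrix ι ι K) ⊆
      spectrum K (A : Matrix ι ι K) * spectrum K (B : Matrix ι ι K))
    (hAB : IsOfFinOrder (A * B)) (hA : A ^ N = 1) (hB : B ^ N = 1) : (A * B) ^ N = 1 := by
  obtain ⟨m, hm, hABm⟩ := hAB.exists_pow_eq_one
  have hAN : (A : Matrix ι ι K) ^ N = 1 := by rw [← Units.val_pow_eq_pow_val, hA, Units.val_one]
  have hBN : (B : Matrix ι ι K) ^ N = 1 := by rw [← Units.val_pow_eq_pow_val, hB, Units.val_one]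
  refine Units.ext
    (Matrix.pow_eq_one_of_forall_mem_spectrum (m := m) ?_ (by exact_mod_cast hm.ne') ?_)
  · rw [← Units.val_pow_eq_pow_val, hABm, Units.val_one]
  rintro _ hμ
  obtain ⟨a, ha, b, hb, rfl⟩ := hS hμ
  rw [mul_pow, spectrum.pow_eq_one_of_pow_eq_one hAN ha, spectrum.pow_eq_one_of_pow_eq_one hBN hb,
    one_mul]

theorem Subgroup.closure_setOf_mem_and_pow_eq_one {M : Type*} [Group M] (G : Subgroup M) (N : ℕ)
    (hmul : ∀ a ∈ G, ∀ b ∈ G, a ^ N = 1 → b ^ N = 1 → (a * b) ^ N = 1) :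
    (closure {g | g ∈ G ∧ g ^ N = 1} : Set M) = {g | g ∈ G ∧ g ^ N = 1} := by
  refine Set.Subset.antisymm (fun g hg => ?_) subset_closure
  induction hg using closure_induction with
  | mem g hg => exact hg
  | one => exact ⟨G.one_mem, one_pow N⟩
  | mul a b _ _ ha hb => exact ⟨G.mul_mem ha.1 hb.1, hmul a ha.1 b hb.1 ha.2 hb.2⟩
  | inv a _ ha => exact ⟨G.inv_mem ha.1, by rw [inv_pow, ha.2, inv_one]⟩

theorem stmt1_general {F : Type*} [Field F] [IsAlgClosed F] [CharZero F] {n : ℕ}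
    (G : Subgroup (GL (Fin n) F)) (hfin : Finite G) (p : ℕ) (k : ℕ)
    (hS : ∀ X Y : GL (Fin n) F, X ∈ G → Y ∈ G →
      spectrum F ((X * Y : GL (Fin n) F) : Matrix (Fin n) (Fin n) F) ⊆
        spectrum F (X : Matrix (Fin n) (Fin n) F) * spectrum F (Y : Matrix (Fin n) (Fin n) F)) :
    (Subgroup.closure {g : GL (Fin n) F | g ∈ G ∧ g ^ (p ^ k) = 1} : Set (GL (Fin n) F)) =
      {g : GL (Fin n) F | g ∈ G ∧ g ^ (p ^ k) = 1} :=
  G.closure_setOf_mem_and_pow_eq_one (p ^ k) fun A hA B hB hAN hBN =>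
    Matrix.GeneralLinearGroup.mul_pow_eq_one_of_spectrum_mul_subset (hS A B hA hB)
      (Submonoid.isOfFinOrder_coe.2 (isOfFinOrder_of_finite (⟨A * B, G.mul_mem hA hB⟩ : G)))
      hAN hBN

/-- If a finite matrix group `G ⊆ GL_n(F)` (`F` algebraically closed of
characteristic zero) has submultiplicative spectrum, then for every `k ≥ 1` the set
`Δ_k(G) = {g ∈ G : g ^ (p ^ k) = 1}` of elements of order dividing `p ^ k` equals the
subgroup `Ω_k(G)` it generates; in particular it is a subgroup of `G`. -/
theorem stmt1 {F : Type*} [Field F] [IsAlgClosed F] [CharZero F] {n : ℕ}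
    (G : Subgroup (GL (Fin n) F)) (hfin : Finite G) (p : ℕ) (hp : p.Prime) (k : ℕ) (hk : 1 ≤ k)
    (hS : ∀ X Y : GL (Fin n) F, X ∈ G → Y ∈ G →
      spectrum F ((X * Y : GL (Fin n) F) : Matrix (Fin n) (Fin n) F) ⊆
        spectrum F (X : Matrix (Fin n) (Fin n) F) * spectrum F (Y : Matrix (Fin n) (Fin n) F)) :
    (Subgroup.closure {g : GL (Fin n) F | g ∈ G ∧ g ^ (p ^ k) = 1} : Set (GL (Fin n) F)) =
      {g : GL (Fin n) F | g ∈ G ∧ g ^ (p ^ k) = 1} :=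
  stmt1_general G hfin p k hS
end

section
/- A finite group G has property Ŝ if and only if for every pair of elements x, y ∈ G, the subgroup ⟨x, y⟩ generated by x and y has property Ŝ. -/
/-!
The inclusion `σ(ρ(ab)) ⊆ σ(ρ(a))·σ(ρ(b))` for `a, b ∈ K` only sees the restriction of `ρ` to
`⟨a, b⟩`, and property Ŝ passes to subgroups (indeed to any group embedding into `G`).
-/

open Pointwise

/-- A finite group `G` has property Ŝ (over `F`) if for every subgroup `K ≤ G` and every
finite-dimensional representation `ρ : K → GL_n(F)`, the matrix group `ρ(K)` has
submultiplicative spectrum: `σ(ρ(a)ρ(b)) ⊆ σ(ρ(a))·σ(ρ(b))` for all `a, b ∈ K`. -/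
def PropertyShat (F : Type*) [Field F] (G : Type*) [Group G] : Prop :=
  ∀ (K : Subgroup G) (n : ℕ) (ρ : K →* GL (Fin n) F) (a b : K),
    spectrum F ((ρ (a * b) : GL (Fin n) F) : Matrix (Fin n) (Fin n) F) ⊆
      spectrum F ((ρ a : GL (Fin n) F) : Matrix (Fin n) (Fin n) F) *
        spectrum F ((ρ b : GL (Fin n) F) : Matrix (Fin n) (Fin n) F)

namespace PropertyShat

variable {F : Type*} [Field F] {G H : Type*} [Group G] [Group H]

theorem of_injective (hG : PropertyShat F G) (f : H →* G) (hf : Function.Injective f) :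
    PropertyShat F H := by
  intro K n ρ a b
  let e : K ≃* K.map f := K.equivMapOfInjective f hf
  simpa using hG (K.map f) n (ρ.comp e.symm.toMonoidHom) (e a) (e b)

theorem subgroup (hG : PropertyShat F G) (H : Subgroup G) : PropertyShat F H :=
  hG.of_injective H.subtype H.subtype_injective

theorem spectrum_mul_subset_comp (hH : PropertyShat F H) {K : Type*} [Group K] (f : H →* K)
    {n : ℕ} (ρ : K →* GL (Fin n) F) (a b : H) :
    spectrum F ((ρ (f a * f b) : GL (Fin n) F) : Matrix (Fin n) (Fin n) F) ⊆
      spectrum F ((ρ (f a) : GL (Fin n) F) : Matrix (Fin n) (Fin n) F) *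
        spectrum F ((ρ (f b) : GL (Fin n) F) : Matrix (Fin n) (Fin n) F) := by
  simpa using hH ⊤ n (ρ.comp (f.comp (⊤ : Subgroup H).subtype)) ⟨a, trivial⟩ ⟨b, trivial⟩

end PropertyShat

theorem stmt6_general {F : Type*} [Field F]
    {G : Type*} [Group G] :
    PropertyShat F G ↔
      ∀ x y : G, PropertyShat F (Subgroup.closure ({x, y} : Set G)) := by
  refine ⟨fun hG x y => hG.subgroup _, fun h K n ρ a b => ?_⟩
  set H := Subgroup.closure ({(a : G), (b : G)} : Set G)
  have hHK : H ≤ K := (Subgroup.closure_le K).mpr <| by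
    rintro z (rfl | rfl)
    exacts [a.2, b.2]
  have ha : (a : G) ∈ H := Subgroup.subset_closure (by simp)
  have hb : (b : G) ∈ H := Subgroup.subset_closure (by simp)
  exact (h a b).spectrum_mul_subset_comp (Subgroup.inclusion hHK) ρ ⟨a, ha⟩ ⟨b, hb⟩

/-- A finite group `G` has property Ŝ if and only if for every pair of
elements `x, y ∈ G` the subgroup `⟨x, y⟩` generated by `x` and `y` has property Ŝ. -/
theorem stmt6 {F : Type*} [Field F] [IsAlgClosed F] [CharZero F]
    {G : Type*} [Group G] [Finite G] :
    PropertyShat F G ↔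
      ∀ x y : G, PropertyShat F (Subgroup.closure ({x, y} : Set G)) :=
  stmt6_general
end

section
/- Let p be an odd prime and G ⊆ GL_p(F) an irreducible monomial p-group of exponent p containing the cyclic permutation matrix P, with all non-diagonal elements of the form DP^k for diagonal D of determinant 1. Then the p-th term of the lower central series of G is trivial; i.e., the nilpotency class of G is at most p − 1. -/
/-!
Fix a primitive `p`-th root of unity `ζ` and let `ψ : ZMod p → F`, `a ↦ ζ ^ a`. Every element of
`G` is a monomial `D P^a`, and as `P ∈ G` its diagonal part `D = (D P^a) P^(-a)` has exponent
`p`; hence `D = diag (ψ ∘ x)` for an exponent vector `x : Fin p → ZMod p`. Writing `S` for the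
cyclic shift of exponent vectors, conjugation by `P^a` acts on diagonal matrices as `S^a`, so
`⁅diag (ψ ∘ x) P^a, diag (ψ ∘ y) P^b⁆ = diag (ψ ∘ ((1 - S^b) x - (1 - S^a) y))`. Since
`1 - S^b = (1 - S)(1 + S + ⋯ + S^(b-1))`, the `j`-th term of the lower central series (`j ≥ 1`)
consists of diagonal matrices with exponent vectors in the range of `(1 - S)^j`. Finally
`(1 - S)^p = 1 - S^p = 0` in characteristic `p`.
-/

open Matrix
open scoped commutatorElement Fin.NatCast Fin.CommRing

section CyclicShiftEnd

variable (R : Type*) [CommRing R] (n : ℕ) [NeZero n]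

def cyclicShiftEnd : Module.End R (Fin n → R) :=
  LinearMap.funLeft R R (· - 1)

variable {R n}

theorem cyclicShiftEnd_pow_apply (k : ℕ) (x : Fin n → R) (i : Fin n) :
    (cyclicShiftEnd R n ^ k) x i = x (i - k) := by
  induction k generalizing x with
  | zero => simp
  | succ k ih =>
    rw [pow_succ, Module.End.mul_apply, ih]
    simp only [cyclicShiftEnd, LinearMap.funLeft_apply]
    congr 1
    push_cast
    ring

theorem cyclicShiftEnd_pow_self : cyclicShiftEnd R n ^ n = 1 := by
  ext x i
  simp [cyclicShiftEnd_pow_apply]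

theorem one_sub_cyclicShiftEnd_pow_char (p : ℕ) [Fact p.Prime] [CharP R p] :
    (1 - cyclicShiftEnd R p) ^ p = 0 := by
  have h := congrArg (Polynomial.aeval (cyclicShiftEnd R p))
    (sub_pow_char (R := Polynomial R) (p := p) 1 Polynomial.X)
  simpa [cyclicShiftEnd_pow_self] using h

end CyclicShiftEnd

theorem Module.End.one_sub_pow_apply_mem_range {R M : Type*} [CommRing R] [AddCommGroup M]
    [Module R M] (S : Module.End R M) {j : ℕ} {x : M} (hx : x ∈ LinearMap.range ((1 - S) ^ j))
    (b : ℕ) : (1 - S ^ b) x ∈ LinearMap.range ((1 - S) ^ (j + 1)) := by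
  obtain ⟨z, rfl⟩ := hx
  have hcomm : Commute ((1 - S) ^ j) (1 - S ^ b) :=
    ((Commute.one_left _).sub_left
      ((Commute.one_right S).sub_right ((Commute.refl S).pow_right b))).pow_left j
  refine ⟨(∑ t ∈ Finset.range b, S ^ t) z, ?_⟩
  rw [← Module.End.mul_apply, ← Module.End.mul_apply, pow_succ, mul_assoc, mul_neg_geom_sum,
    hcomm.eq]

section CyclicShift

variable (R : Type*) [Semiring R] (n : ℕ) [NeZero n]

def cyclicShift : Matrix (Fin n) (Fin n) R :=
  of fun i j => if i = j + 1 then 1 else 0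

variable {R n}

theorem cyclicShift_pow (k : ℕ) :
    cyclicShift R n ^ k = of fun i j : Fin n => if i = j + k then 1 else 0 := by
  induction k with
  | zero => ext i j; simp [one_apply]
  | succ k ih =>
    ext i j
    rw [pow_succ, ih, cyclicShift, mul_apply, Finset.sum_eq_single (j + 1)]
    · simp [add_assoc, add_comm (1 : Fin n)]
    · intro l _ hl
      simp [hl]
    · simp

theorem cyclicShift_pow_mul_diagonal (k : ℕ) (e : Fin n → R) :
    cyclicShift R n ^ k * diagonal e = diagonal (fun i => e (i - k)) * cyclicShift R n ^ k := by
  ext i j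
  rw [mul_diagonal, diagonal_mul, cyclicShift_pow]
  by_cases h : i = j + k <;> simp [h]

theorem diagonal_mul_cyclicShift_pow_mul (d e : Fin n → R) (a b : ℕ) :
    diagonal d * cyclicShift R n ^ a * (diagonal e * cyclicShift R n ^ b) =
      diagonal (fun i => d i * e (i - a)) * cyclicShift R n ^ (a + b) := by
  rw [mul_assoc, ← mul_assoc (_ ^ a), cyclicShift_pow_mul_diagonal, mul_assoc, ← pow_add,
    ← mul_assoc, diagonal_mul_diagonal]

end CyclicShift

section DiagonalCharSubgroup

variable {R F : Type*} [CommRing R] [Field F]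

/-- `χ⁻¹(A)`, for the map `χ : diagonal (ψ ∘ x) ↦ x` to exponent vectors. -/
def diagonalCharSubgroup {ι : Type*} [Fintype ι] [DecidableEq ι] (ψ : AddChar R F)
    (A : Submodule R (ι → R)) : Subgroup (GL ι F) where
  carrier := {g | ∃ x ∈ A, (g : Matrix ι ι F) = diagonal fun i => ψ (x i)}
  one_mem' := ⟨0, A.zero_mem, by simp⟩
  mul_mem' := by
    rintro _ _ ⟨x, hx, hgx⟩ ⟨y, hy, hgy⟩
    exact ⟨x + y, A.add_mem hx hy, by simp [hgx, hgy, AddChar.map_add_eq_mul]⟩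
  inv_mem' := by
    rintro g ⟨x, hx, hgx⟩
    refine ⟨-x, A.neg_mem hx, Units.inv_eq_of_mul_eq_one_right ?_⟩
    simp [hgx, ← AddChar.map_add_eq_mul]

theorem diagonalCharSubgroup_bot {ι : Type*} [Fintype ι] [DecidableEq ι] (ψ : AddChar R F) :
    diagonalCharSubgroup (ι := ι) ψ ⊥ = ⊥ := by
  refine eq_bot_iff.mpr fun g ⟨x, hx, hgx⟩ => ?_
  rw [(Submodule.mem_bot R).mp hx] at hgx
  exact Subgroup.mem_bot.mpr (Units.ext (by simpa using hgx))

variable {n : ℕ} [NeZero n] (ψ : AddChar R F)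

theorem coe_commutator_eq_diagonal {g h : GL (Fin n) F} {x y : Fin n → R} {a b : ℕ}
    (hg : (g : Matrix (Fin n) (Fin n) F) = diagonal (fun i => ψ (x i)) * cyclicShift F n ^ a)
    (hh : (h : Matrix (Fin n) (Fin n) F) = diagonal (fun i => ψ (y i)) * cyclicShift F n ^ b) :
    ((⁅g, h⁆ : GL (Fin n) F) : Matrix (Fin n) (Fin n) F) = diagonal fun i =>
      ψ (((1 - cyclicShiftEnd R n ^ b) x - (1 - cyclicShiftEnd R n ^ a) y) i) := by
  have hprod : (diagonal fun i =>
        ψ (((1 - cyclicShiftEnd R n ^ b) x - (1 - cyclicShiftEnd R n ^ a) y) i)) *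
      ((h * g : GL (Fin n) F) : Matrix (Fin n) (Fin n) F) = (g * h : GL (Fin n) F) := by
    rw [Units.val_mul, Units.val_mul, hg, hh, diagonal_mul_cyclicShift_pow_mul,
      diagonal_mul_cyclicShift_pow_mul, ← mul_assoc, diagonal_mul_diagonal, add_comm b a]
    congr 2
    ext i
    simp only [LinearMap.sub_apply, Module.End.one_apply, Pi.sub_apply, cyclicShiftEnd_pow_apply,
      ← AddChar.map_add_eq_mul]
    congr 1
    ring
  have hcomm : ⁅g, h⁆ * (h * g) = g * h := by group
  exact (h * g).isUnit.mul_right_cancel (by rw [← Units.val_mul, hcomm, hprod])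

theorem commutator_mem_diagonalCharSubgroup {g h : GL (Fin n) F} {x y : Fin n → R} {a b j : ℕ}
    (hg : (g : Matrix (Fin n) (Fin n) F) = diagonal (fun i => ψ (x i)) * cyclicShift F n ^ a)
    (hh : (h : Matrix (Fin n) (Fin n) F) = diagonal (fun i => ψ (y i)) * cyclicShift F n ^ b)
    (hx : x ∈ LinearMap.range ((1 - cyclicShiftEnd R n) ^ j))
    (hy : (1 - cyclicShiftEnd R n ^ a) y ∈ LinearMap.range ((1 - cyclicShiftEnd R n) ^ (j + 1))) :
    ⁅g, h⁆ ∈ diagonalCharSubgroup ψ (LinearMap.range ((1 - cyclicShiftEnd R n) ^ (j + 1))) :=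
  ⟨_, sub_mem (Module.End.one_sub_pow_apply_mem_range _ hx b) hy,
    coe_commutator_eq_diagonal ψ hg hh⟩

theorem lowerCentralSeries_succ_le_diagonalCharSubgroup {G : Subgroup (GL (Fin n) F)}
    (hG : ∀ g ∈ G, ∃ (x : Fin n → R) (a : ℕ),
      (g : Matrix (Fin n) (Fin n) F) = diagonal (fun i => ψ (x i)) * cyclicShift F n ^ a)
    (j : ℕ) :
    G.lowerCentralSeries (j + 1) ≤
      diagonalCharSubgroup ψ (LinearMap.range ((1 - cyclicShiftEnd R n) ^ (j + 1))) := by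
  rw [Subgroup.lowerCentralSeries_succ, Subgroup.commutator_le]
  induction j with
  | zero =>
    intro g hg h hh
    obtain ⟨x, a, hgx⟩ := hG g hg
    obtain ⟨y, b, hhy⟩ := hG h hh
    exact commutator_mem_diagonalCharSubgroup ψ hgx hhy (by simp)
      (Module.End.one_sub_pow_apply_mem_range _ (by simp) a)
  | succ j ih =>
    intro g hg h hh
    obtain ⟨x, hx, hgx⟩ := Subgroup.commutator_le.mpr ih hg
    obtain ⟨y, b, hhy⟩ := hG h hh
    exact commutator_mem_diagonalCharSubgroup ψ (a := 0) (by simpa using hgx) hhy hx (by simp)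

end DiagonalCharSubgroup

theorem exists_coe_eq_diagonal_zmodChar_mul {F ι : Type*} [Field F] [Fintype ι] [DecidableEq ι]
    {p : ℕ} [NeZero p] {ζ : F} (hζ : IsPrimitiveRoot ζ p) {G : Subgroup (GL ι F)}
    (hexp : ∀ g ∈ G, g ^ p = 1) {u g : GL ι F} (hu : u ∈ G) (hg : g ∈ G) {d : ι → F} {a : ℕ}
    (hgd : (g : Matrix ι ι F) = diagonal d * (u : Matrix ι ι F) ^ a) :
    ∃ x : ι → ZMod p, (g : Matrix ι ι F) =
      diagonal (fun i => AddChar.zmodChar p hζ.pow_eq_one (x i)) * (u : Matrix ι ι F) ^ a := by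
  have hdiag : ((g * (u ^ a)⁻¹ : GL ι F) : Matrix ι ι F) = diagonal d := by
    rw [Units.val_mul, hgd, mul_assoc, ← Units.val_pow_eq_pow_val, Units.mul_inv, mul_one]
  have hd : ∀ i, d i ^ p = 1 := fun i => by
    have := congrArg (fun m : GL ι F => (m : Matrix ι ι F) i i)
      (hexp _ (G.mul_mem hg (G.inv_mem (G.pow_mem hu a))))
    simpa [Units.val_pow_eq_pow_val, hdiag, diagonal_pow] using this
  choose k _ hk using fun i => hζ.eq_pow_of_pow_eq_one (hd i)
  exact ⟨fun i => k i, by simp [AddChar.zmodChar_apply', hk, hgd]⟩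

theorem stmt10_general {F : Type*} [Field F] [IsAlgClosed F] [CharZero F]
    (p : ℕ) [Fact p.Prime]
    (G : Subgroup (GL (Fin p) F))
    (hexp : ∀ g ∈ G, g ^ p = 1)
    (P : Matrix (Fin p) (Fin p) F) (hP : P = Matrix.of fun i j => if i = j + 1 then 1 else 0)
    (hPmem : ∃ Pu : GL (Fin p) F, (Pu : Matrix (Fin p) (Fin p) F) = P ∧ Pu ∈ G)
    (hform : ∀ g ∈ G,
      (∃ d : Fin p → F, (g : Matrix (Fin p) (Fin p) F) = Matrix.diagonal d) ∨
      (∃ (d : Fin p → F) (k : ℕ), 1 ≤ k ∧ k ≤ p - 1 ∧ (Matrix.diagonal d).det = 1 ∧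
        (g : Matrix (Fin p) (Fin p) F) = Matrix.diagonal d * P ^ k)) :
    lowerCentralSeries G p = ⊥ := by
  obtain ⟨ζ, hζ⟩ := HasEnoughRootsOfUnity.exists_primitiveRoot F p
  obtain ⟨u, hu, huG⟩ := hPmem
  have hG : ∀ g ∈ G, ∃ (x : Fin p → ZMod p) (a : ℕ), (g : Matrix (Fin p) (Fin p) F) =
      diagonal (fun i => AddChar.zmodChar p hζ.pow_eq_one (x i)) * cyclicShift F p ^ a := by
    intro g hg
    obtain ⟨d, a, hgd⟩ : ∃ (d : Fin p → F) (a : ℕ),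
        (g : Matrix (Fin p) (Fin p) F) = diagonal d * (u : Matrix (Fin p) (Fin p) F) ^ a := by
      rcases hform g hg with ⟨d, hgd⟩ | ⟨d, k, -, -, -, hgd⟩
      · exact ⟨d, 0, by simpa using hgd⟩
      · exact ⟨d, k, hu ▸ hgd⟩
    obtain ⟨x, hx⟩ := exists_coe_eq_diagonal_zmodChar_mul hζ hexp huG hg hgd
    exact ⟨x, a, by rw [hx, hu, hP]; rfl⟩
  have h := lowerCentralSeries_succ_le_diagonalCharSubgroup _ hG (p - 1)
  rwa [Nat.sub_add_cancel (Fact.out : p.Prime).one_le, one_sub_cyclicShiftEnd_pow_char,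
    LinearMap.range_zero, diagonalCharSubgroup_bot, le_bot_iff] at h

/-- Let `p` be an odd prime and `G ⊆ GL_p(F)` an irreducible monomial
`p`-group of exponent `p` containing the cyclic permutation matrix `P`, in which every
element is either diagonal or of the form `D P^k` with `D` diagonal of determinant `1`
and `1 ≤ k ≤ p - 1`.  Then the `p`-th term of the lower central series of `G` is
trivial; i.e., the nilpotency class of `G` is at most `p - 1`. -/
theorem stmt10 {F : Type*} [Field F] [IsAlgClosed F] [CharZero F]
    (p : ℕ) [Fact p.Prime] (hodd : Odd p)
    (G : Subgroup (GL (Fin p) F)) (hpG : IsPGroup p G) (hfin : Finite G)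
    (hexp : ∀ g ∈ G, g ^ p = 1)
    (P : Matrix (Fin p) (Fin p) F) (hP : P = Matrix.of fun i j => if i = j + 1 then 1 else 0)
    (hPmem : ∃ Pu : GL (Fin p) F, (Pu : Matrix (Fin p) (Fin p) F) = P ∧ Pu ∈ G)
    (hform : ∀ g ∈ G,
      (∃ d : Fin p → F, (g : Matrix (Fin p) (Fin p) F) = Matrix.diagonal d) ∨
      (∃ (d : Fin p → F) (k : ℕ), 1 ≤ k ∧ k ≤ p - 1 ∧ (Matrix.diagonal d).det = 1 ∧
        (g : Matrix (Fin p) (Fin p) F) = Matrix.diagonal d * P ^ k))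
    (hirr : ∀ W : Submodule F (Fin p → F),
      (∀ g ∈ G, W.map (Matrix.mulVecLin (g : Matrix (Fin p) (Fin p) F)) ≤ W) →
      W = ⊥ ∨ W = ⊤) :
    lowerCentralSeries G p = ⊥ :=
  stmt10_general p G hexp P hP hPmem hform
end

section
/- Every finite p-abelian group has property Ŝ, where a finite p-group G is p-abelian if (xy)^p = x^p y^p for all x, y ∈ G. -/
open Pointwise

/-!
Induction on the dimension. If `ρ a` and `ρ b` commute, a common eigenvector writes each
eigenvalue of `ρ (a * b)` as a product. A proper invariant subspace reduces the claim to the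
subrepresentation and the quotient. For irreducible `ρ`, Schur's lemma makes each `ρ (x ^ p)`
a scalar, because `p`-th powers are central in a `p`-abelian `p`-group. Choose `u` central
in `G` modulo `Z = ρ⁻¹(Z(GL V))` but not in `Z`; then `ρ u * ρ g * (ρ u)⁻¹ = c_g • ρ g` with
`c_g` a `p`-power root of unity. If `c_a ≠ 1`, the spectrum of `ρ a` is stable under
multiplication by `c_a`, so it contains every `p`-th root of the scalar `ρ (a ^ p)`, and any
`μ` with `μ ^ p` equal to the scalar `ρ ((a * b) ^ p)` factors as `(μ / β) * β` with
`β ∈ σ (ρ b)`; likewise if `c_b ≠ 1`. If `c_a = c_b = 1`, the centralizer of `ρ u` acts on an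
eigenspace of the non-scalar `ρ u`, which has smaller dimension.
-/

open scoped commutatorElement

def IsPAbelian (p : ℕ) (G : Type*) [Group G] : Prop :=
  ∀ x y : G, (x * y) ^ p = x ^ p * y ^ p

namespace IsPAbelian

variable {p : ℕ} {G : Type*} [Group G]

lemma subgroup (h : IsPAbelian p G) (K : Subgroup G) : IsPAbelian p K :=
  fun x y => Subtype.ext (h x y)

lemma commute_pow_pow_pred (h : IsPAbelian p G) (x y : G) : Commute (y ^ p) (x ^ (p - 1)) := by
  rcases p with _ | q
  · simp
  have hconj : (y * x) ^ (q + 1) = x⁻¹ * (x * y) ^ (q + 1) * x := by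
    rw [show y * x = x⁻¹ * (x * y) * x⁻¹⁻¹ by group, conj_pow, inv_inv]
  have hx : x⁻¹ * (x ^ (q + 1) * y ^ (q + 1)) * x = x ^ q * y ^ (q + 1) * x := by
    rw [pow_succ']; group
  rw [h, h, hx, pow_succ x q, ← mul_assoc] at hconj
  exact mul_right_cancel hconj

lemma pow_mem_center (h : IsPAbelian p G) (hG : IsPGroup p G) (hp : 0 < p) (y : G) :
    y ^ p ∈ Subgroup.center G := by
  rw [Subgroup.mem_center_iff]
  intro x
  have hcop : p.Coprime (p - 1) := (Nat.coprime_self_sub_right hp).mpr (Nat.coprime_one_right p)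
  obtain ⟨z, rfl⟩ := (hG.powEquiv hcop).surjective x
  exact (h.commute_pow_pow_pred z y).eq.symm

end IsPAbelian

theorem IsPGroup.exists_forall_commutatorElement_mem {p : ℕ} [Fact p.Prime] {G : Type*} [Group G]
    [Finite G] (hG : IsPGroup p G) (N : Subgroup G) [N.Normal] (hN : N ≠ ⊤) :
    ∃ u ∉ N, ∀ g, ⁅u, g⁆ ∈ N := by
  have : Nontrivial (G ⧸ N) := QuotientGroup.nontrivial_iff.mpr hN
  have := (hG.to_quotient N).center_nontrivial
  obtain ⟨⟨z, hz⟩, hz1⟩ := exists_ne (1 : Subgroup.center (G ⧸ N))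
  obtain ⟨u, rfl⟩ := QuotientGroup.mk_surjective z
  refine ⟨u, fun hu => hz1 (Subtype.ext ((QuotientGroup.eq_one_iff u).mpr hu)), fun g => ?_⟩
  rw [← QuotientGroup.eq_one_iff, ← QuotientGroup.mk'_apply, map_commutatorElement,
    commutatorElement_eq_one_iff_commute]
  exact (Subgroup.mem_center_iff.mp hz g).symm

section RootsOfUnity

variable {K : Type*} [Field K] {p : ℕ}

lemma mem_of_pow_eq_pow_of_forall_mul_mem (hp : p.Prime) {S : Set K} {c y x : K} {m : ℕ}
    (hS : ∀ z ∈ S, c * z ∈ S) (hy : y ∈ S) (hy0 : y ≠ 0) (hc : c ≠ 1) (hcm : c ^ p ^ m = 1)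
    (hx : x ^ p = y ^ p) : x ∈ S := by
  have hpow : ∀ i : ℕ, c ^ i * y ∈ S := by
    intro i
    induction i with
    | zero => simpa using hy
    | succ i ih => rw [pow_succ', mul_assoc]; exact hS _ ih
  obtain ⟨j, -, hj⟩ := (Nat.dvd_prime_pow hp).mp (orderOf_dvd_of_pow_eq_one hcm)
  have hj0 : j ≠ 0 := by
    rintro rfl
    exact hc (orderOf_eq_one_iff.mp (by simpa using hj))
  have : NeZero (orderOf c) := ⟨by rw [hj]; exact pow_ne_zero j hp.ne_zero⟩
  have hroot : (x / y) ^ orderOf c = 1 := by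
    obtain ⟨l, hl⟩ : p ∣ orderOf c := hj ▸ dvd_pow_self p hj0
    rw [hl, pow_mul, div_pow, hx, div_self (pow_ne_zero _ hy0), one_pow]
  obtain ⟨i, -, hi⟩ := (IsPrimitiveRoot.orderOf c).eq_pow_of_pow_eq_one hroot
  rw [← div_mul_cancel₀ x hy0, ← hi]
  exact hpow i

lemma mem_mul_of_forall_pow_eq_mem_left {S T : Set K} {α μ y : K}
    (hS : ∀ x, x ^ p = α → x ∈ S) (hy : y ∈ T) (hy0 : y ≠ 0) (hμ : μ ^ p = α * y ^ p) :
    μ ∈ S * T :=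
  ⟨μ / y, hS _ (by rw [div_pow, hμ, mul_div_cancel_right₀ _ (pow_ne_zero p hy0)]), y, hy,
    div_mul_cancel₀ μ hy0⟩

lemma mem_mul_of_forall_pow_eq_mem_right {S T : Set K} {β μ x : K}
    (hT : ∀ y, y ^ p = β → y ∈ T) (hx : x ∈ S) (hx0 : x ≠ 0) (hμ : μ ^ p = x ^ p * β) :
    μ ∈ S * T := by
  rw [mul_comm]
  exact mem_mul_of_forall_pow_eq_mem_left hT hx hx0 (by rw [hμ, mul_comm])

end RootsOfUnity

section SpectrumAlgebra

variable {K A : Type*} [Field K] [Ring A] [Algebra K A]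

lemma spectrum.pow_eq_of_pow_eq_algebraMap [Nontrivial A] {a : A} {n : ℕ} {α μ : K}
    (ha : a ^ n = algebraMap K A α) (hμ : μ ∈ spectrum K a) : μ ^ n = α := by
  simpa [ha, spectrum.scalar_eq] using spectrum.pow_mem_pow a n hμ

lemma spectrum.mul_mem_of_units_conj_eq_smul {a : A} {X : Aˣ} {c z : K} (hc : c ≠ 0)
    (h : X * a * ↑X⁻¹ = c • a) (hz : z ∈ spectrum K a) : c * z ∈ spectrum K a := by
  have hsmul := spectrum.unit_smul_eq_smul a (Units.mk0 c hc)
  rw [Units.smul_def, Units.val_mk0, ← h, spectrum.units_conjugate] at hsmul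
  rw [hsmul]
  exact Set.smul_mem_smul_set hz

end SpectrumAlgebra

namespace Module.End

variable {K V : Type*} [Field K] [AddCommGroup V] [Module K V]

lemma mem_spectrum_iff_exists_apply_eq_smul [FiniteDimensional K V] {f : End K V} {μ : K} :
    μ ∈ spectrum K f ↔ ∃ v ≠ 0, f v = μ • v := by
  rw [← hasEigenvalue_iff_mem_spectrum]
  refine ⟨fun h => ?_, fun ⟨v, hv, hfv⟩ =>
    hasEigenvalue_of_hasEigenvector ⟨mem_eigenspace_iff.mpr hfv, hv⟩⟩
  obtain ⟨v, hv⟩ := h.exists_hasEigenvector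
  exact ⟨v, hv.2, hv.apply_eq_smul⟩

lemma eigenspace_le_comap_of_commute {f g : End K V} (h : Commute f g) (μ : K) :
    f.eigenspace μ ≤ (f.eigenspace μ).comap g :=
  mapsTo_genEigenspace_of_comm h μ 1

variable [FiniteDimensional K V]

lemma spectrum_restrict_subset (f : End K V) {W : Submodule K V} (hW : W ≤ W.comap f) :
    spectrum K (f.restrict hW) ⊆ spectrum K f := by
  intro μ hμ
  obtain ⟨w, hw0, hw⟩ := mem_spectrum_iff_exists_apply_eq_smul.mp hμ
  exact mem_spectrum_iff_exists_apply_eq_smul.mpr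
    ⟨w, by simpa using hw0, congr_arg Subtype.val hw⟩

lemma spectrum_mapQ_subset (f : End K V) {W : Submodule K V} (hW : W ≤ W.comap f) :
    spectrum K (W.mapQ W f hW) ⊆ spectrum K f := by
  intro μ hμ
  contrapose! hμ
  rw [spectrum.notMem_iff, isUnit_iff] at hμ ⊢
  have hle : W ≤ W.comap (algebraMap K (End K V) μ - f) := fun x hx =>
    W.sub_mem (by simpa using W.smul_mem μ hx) (hW hx)
  have hq : algebraMap K (End K (V ⧸ W)) μ - W.mapQ W f hW =
      W.mapQ W (algebraMap K (End K V) μ - f) hle := by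
    ext; simp
  have hsurj : Function.Surjective (W.mapQ W (algebraMap K (End K V) μ - f) hle) := by
    intro x
    obtain ⟨v, rfl⟩ := W.mkQ_surjective x
    obtain ⟨w, rfl⟩ := hμ.2 v
    exact ⟨W.mkQ w, rfl⟩
  rw [hq]
  exact ⟨LinearMap.injective_iff_surjective.mpr hsurj, hsurj⟩

lemma spectrum_subset_union_restrict_mapQ (f : End K V) {W : Submodule K V}
    (hW : W ≤ W.comap f) :
    spectrum K f ⊆ spectrum K (f.restrict hW) ∪ spectrum K (W.mapQ W f hW) := by
  intro μ hμ
  obtain ⟨v, hv0, hv⟩ := mem_spectrum_iff_exists_apply_eq_smul.mp hμ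
  by_cases hvW : v ∈ W
  · exact .inl (mem_spectrum_iff_exists_apply_eq_smul.mpr
      ⟨⟨v, hvW⟩, by simpa using hv0, Subtype.ext hv⟩)
  · refine .inr (mem_spectrum_iff_exists_apply_eq_smul.mpr ⟨W.mkQ v, ?_, ?_⟩)
    · simpa using hvW
    · simp [hv]

variable [IsAlgClosed K]

lemma spectrum_mul_subset_of_commute {f g : End K V} (hfg : Commute f g) :
    spectrum K (f * g) ⊆ spectrum K f * spectrum K g := by
  intro μ hμ
  obtain ⟨v, hv0, hv⟩ := mem_spectrum_iff_exists_apply_eq_smul.mp hμ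
  have hE := eigenspace_le_comap_of_commute ((Commute.refl f).mul_left hfg.symm) μ
  have : Nontrivial ((f * g).eigenspace μ) := Submodule.nontrivial_iff_ne_bot.mpr
    (hasEigenvalue_of_hasEigenvector ⟨mem_eigenspace_iff.mpr hv, hv0⟩)
  obtain ⟨α, hα⟩ := exists_eigenvalue (f.restrict hE)
  obtain ⟨⟨w, hwE⟩, hw⟩ := hα.exists_hasEigenvector
  have hfw : f w = α • w := congr_arg Subtype.val hw.apply_eq_smul
  have hw0 : w ≠ 0 := by simpa using hw.2
  have hgw : α • g w = μ • w := by
    rw [← map_smul, ← hfw, ← mul_apply, ← hfg.eq]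
    exact mem_eigenspace_iff.mp hwE
  have : Nontrivial V := ⟨⟨w, 0, hw0⟩⟩
  rcases eq_or_ne α 0 with rfl | hα0
  · obtain ⟨β, hβ⟩ := exists_eigenvalue g
    have hμ0 : μ = 0 := by simpa [hw0] using hgw.symm
    exact ⟨0, mem_spectrum_iff_exists_apply_eq_smul.mpr ⟨w, hw0, hfw⟩, β, hβ.mem_spectrum,
      by simp [hμ0]⟩
  · refine ⟨α, mem_spectrum_iff_exists_apply_eq_smul.mpr ⟨w, hw0, hfw⟩, α⁻¹ * μ,
      mem_spectrum_iff_exists_apply_eq_smul.mpr ⟨w, hw0, ?_⟩, by field_simp⟩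
    rw [mul_smul, ← hgw, smul_smul, inv_mul_cancel₀ hα0, one_smul]

lemma forall_pow_eq_mem_spectrum [Nontrivial V] {p m : ℕ} (hp : p.Prime) {f : End K V}
    (hf : IsUnit f) {X : (End K V)ˣ} {c α : K} (hfp : f ^ p = algebraMap K _ α)
    (hX : X * f * ↑X⁻¹ = c • f) (hc : c ≠ 1) (hcm : c ^ p ^ m = 1) (x : K) (hx : x ^ p = α) :
    x ∈ spectrum K f := by
  obtain ⟨y, hy⟩ := exists_eigenvalue f
  have hc0 : c ≠ 0 := by rintro rfl; simp [hp.ne_zero] at hcm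
  refine mem_of_pow_eq_pow_of_forall_mul_mem hp
    (fun z hz => spectrum.mul_mem_of_units_conj_eq_smul hc0 hX hz) hy.mem_spectrum
    (fun h => spectrum.zero_notMem K hf (h ▸ hy.mem_spectrum)) hc hcm ?_
  rw [hx, spectrum.pow_eq_of_pow_eq_algebraMap hfp hy.mem_spectrum]

end Module.End

namespace Representation

open Module.End

variable {k V : Type*} [Field k] [AddCommGroup V] [Module k V]

def SubmultiplicativeSpectrum {G : Type*} [Monoid G] (ρ : Representation k G V) : Prop :=
  ∀ a b : G, spectrum k (ρ (a * b)) ⊆ spectrum k (ρ a) * spectrum k (ρ b)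

section Monoid

variable {G : Type*} [Monoid G] (ρ : Representation k G V)

lemma exists_le_comap_of_not_isIrreducible [Nontrivial V] (h : ¬ρ.IsIrreducible) :
    ∃ W : Submodule k V, (∀ g, W ≤ W.comap (ρ g)) ∧ W ≠ ⊥ ∧ W ≠ ⊤ := by
  by_contra! hW
  have : Nontrivial (Subrepresentation ρ) :=
    ⟨⊥, ⊤, fun h => bot_ne_top (congr_arg Subrepresentation.toSubmodule h)⟩
  refine h ⟨fun σ => ?_⟩
  by_cases hσ : σ.toSubmodule = ⊥
  · exact .inl (Subrepresentation.toSubmodule_injective hσ)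
  · exact .inr (Subrepresentation.toSubmodule_injective
      (hW _ (fun g _ hx => σ.apply_mem_toSubmodule g hx) hσ))

variable [FiniteDimensional k V]

lemma submultiplicativeSpectrum_of_le_comap (W : Submodule k V) (hW : ∀ g, W ≤ W.comap (ρ g))
    (hsub : (ρ.subrepresentation W hW).SubmultiplicativeSpectrum)
    (hquot : (ρ.quotient W hW).SubmultiplicativeSpectrum) :
    ρ.SubmultiplicativeSpectrum := by
  intro a b μ hμ
  rcases spectrum_subset_union_restrict_mapQ _ (hW (a * b)) hμ with h | h
  · exact Set.mul_subset_mul (spectrum_restrict_subset _ (hW a))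
      (spectrum_restrict_subset _ (hW b)) (hsub a b h)
  · exact Set.mul_subset_mul (spectrum_mapQ_subset _ (hW a))
      (spectrum_mapQ_subset _ (hW b)) (hquot a b h)

lemma exists_eq_algebraMap_of_commute [IsAlgClosed k] [ρ.IsIrreducible] {T : Module.End k V}
    (hT : ∀ g, Commute T (ρ g)) : ∃ c : k, T = algebraMap k _ c := by
  obtain ⟨c, hc⟩ := IsIrreducible.algebraMap_intertwiningMap_bijective_of_isAlgClosed.2
    (T.intertwiningMap_of_isIntertwiningMap ρ ρ fun g v => congr($(hT g) v))
  exact ⟨c, LinearMap.ext fun v => by simpa using (DFunLike.congr_fun hc v).symm⟩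

end Monoid

section Group

variable [IsAlgClosed k] [FiniteDimensional k V] {G : Type*} [Group G] (ρ : Representation k G V)

lemma exists_pow_eq_one_and_conj_eq_smul [Nontrivial V] [ρ.IsIrreducible] {p : ℕ}
    (hG : IsPGroup p G) {u g : G} (h : ∀ x, Commute (ρ ⁅u, g⁆) (ρ x)) :
    ∃ (c : k) (m : ℕ), c ^ p ^ m = 1 ∧ ρ.asGroupHom u * ρ g * ↑(ρ.asGroupHom u)⁻¹ = c • ρ g := by
  obtain ⟨c, hc⟩ := ρ.exists_eq_algebraMap_of_commute h
  obtain ⟨m, hm⟩ := hG ⁅u, g⁆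
  refine ⟨c, m, (algebraMap k (Module.End k V)).injective ?_, ?_⟩
  · rw [map_pow, ← hc, ← map_pow, hm, map_one, map_one]
  · rw [← map_inv, asGroupHom_apply, asGroupHom_apply, ← map_mul, ← map_mul, Algebra.smul_def,
      ← hc, ← map_mul, commutatorElement_def]
    congr 1
    group

lemma spectrum_mul_subset_of_commute_of_ne_algebraMap {u a b : G}
    (ha : Commute (ρ u) (ρ a)) (hb : Commute (ρ u) (ρ b)) (hu : ∀ ν, ρ u ≠ algebraMap k _ ν)
    (ih : ∀ (C : Subgroup G) (E : Submodule k V) (hE : ∀ g : C, E ≤ E.comap (ρ g)), E ≠ ⊤ →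
      (subrepresentation (ρ.comp C.subtype) E hE).SubmultiplicativeSpectrum) :
    spectrum k (ρ (a * b)) ⊆ spectrum k (ρ a) * spectrum k (ρ b) := by
  intro μ hμ
  obtain ⟨v, hv0, hv⟩ := mem_spectrum_iff_exists_apply_eq_smul.mp hμ
  have hab : Commute (ρ u) (ρ (a * b)) := by rw [map_mul]; exact ha.mul_right hb
  have hμE := eigenspace_le_comap_of_commute hab.symm μ
  have : Nontrivial (eigenspace (ρ (a * b)) μ) := Submodule.nontrivial_iff_ne_bot.mpr
    (hasEigenvalue_of_hasEigenvector ⟨mem_eigenspace_iff.mpr hv, hv0⟩)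
  obtain ⟨ν, hν⟩ := exists_eigenvalue ((ρ u).restrict hμE)
  obtain ⟨⟨w, hwμ⟩, hw⟩ := hν.exists_hasEigenvector
  let C : Subgroup G := (Subgroup.centralizer {ρ.asGroupHom u}).comap ρ.asGroupHom
  have hC : ∀ {g}, g ∈ C ↔ Commute (ρ u) (ρ g) := by
    intro g
    simp [C, Subgroup.mem_centralizer_singleton_iff, Units.ext_iff, commute_iff_eq, eq_comm,
      asGroupHom_apply]
  have hCE (g : C) : eigenspace (ρ u) ν ≤ (eigenspace (ρ u) ν).comap (ρ g) :=
    eigenspace_le_comap_of_commute (hC.mp g.2) ν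
  have hET : eigenspace (ρ u) ν ≠ ⊤ := fun h => hu ν <| LinearMap.ext fun x => by
    simpa using mem_eigenspace_iff.mp (h ▸ Submodule.mem_top : x ∈ eigenspace (ρ u) ν)
  have hμE : μ ∈ spectrum k ((subrepresentation (ρ.comp C.subtype) _ hCE)
      (⟨a, hC.mpr ha⟩ * ⟨b, hC.mpr hb⟩)) :=
    mem_spectrum_iff_exists_apply_eq_smul.mpr ⟨⟨w, mem_eigenspace_iff.mpr
      (congr_arg Subtype.val hw.apply_eq_smul)⟩, by simpa using hw.2,
      Subtype.ext (mem_eigenspace_iff.mp hwμ)⟩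
  have hsub := ih C _ hCE hET _ _ hμE
  exact Set.mul_subset_mul (spectrum_restrict_subset (ρ a) (hCE ⟨a, hC.mpr ha⟩))
    (spectrum_restrict_subset (ρ b) (hCE ⟨b, hC.mpr hb⟩)) hsub

theorem spectrum_mul_subset_of_isIrreducible [Nontrivial V] [Finite G] {p : ℕ}
    [hp : Fact p.Prime] (hG : IsPGroup p G) (hpab : IsPAbelian p G) [ρ.IsIrreducible] {a b : G}
    (hab : ¬Commute (ρ a) (ρ b))
    (ih : ∀ (C : Subgroup G) (E : Submodule k V) (hE : ∀ g : C, E ≤ E.comap (ρ g)), E ≠ ⊤ →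
      (subrepresentation (ρ.comp C.subtype) E hE).SubmultiplicativeSpectrum) :
    spectrum k (ρ (a * b)) ⊆ spectrum k (ρ a) * spectrum k (ρ b) := by
  have hunit (g : G) : IsUnit (ρ g) := asGroupHom_apply ρ g ▸ (ρ.asGroupHom g).isUnit
  choose α hα using fun x => ρ.exists_eq_algebraMap_of_commute fun g => by
    rw [commute_iff_eq, ← map_mul, ← map_mul,
      Subgroup.mem_center_iff.mp (hpab.pow_mem_center hG hp.out.pos x) g]
  have hpow (g : G) : ρ g ^ p = algebraMap k _ (α g) := by rw [← map_pow, hα]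
  let Z : Subgroup G := (Subgroup.center (Module.End k V)ˣ).comap ρ.asGroupHom
  have hZ {z : G} (hz : z ∈ Z) (g : G) : Commute (ρ z) (ρ g) := by
    simpa [Units.ext_iff, asGroupHom_apply, commute_iff_eq, eq_comm] using
      Subgroup.mem_center_iff.mp hz (ρ.asGroupHom g)
  obtain ⟨u, huZ, hu⟩ := hG.exists_forall_commutatorElement_mem Z
    fun h => hab (hZ (h ▸ Subgroup.mem_top a) b)
  choose c m hcm hc using fun g => ρ.exists_pow_eq_one_and_conj_eq_smul hG (hZ (hu g))
  have hcomm {g : G} (hg : c g = 1) : Commute (ρ u) (ρ g) := by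
    have := hc g
    rw [hg, one_smul, Units.mul_inv_eq_iff_eq_mul, asGroupHom_apply] at this
    exact this
  intro μ hμ
  have hμp : μ ^ p = α a * α b := spectrum.pow_eq_of_pow_eq_algebraMap
    (by rw [← map_pow, hpab, map_mul, hα, hα, ← map_mul]) hμ
  by_cases hca : c a = 1
  · by_cases hcb : c b = 1
    · refine spectrum_mul_subset_of_commute_of_ne_algebraMap ρ (hcomm hca) (hcomm hcb)
        (fun ν hν => huZ ?_) ih hμ
      refine Subgroup.mem_comap.mpr (Subgroup.mem_center_iff.mpr fun g => Units.ext ?_)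
      simp [asGroupHom_apply, hν, Algebra.commutes]
    · obtain ⟨y, hy⟩ := exists_eigenvalue (ρ a)
      exact mem_mul_of_forall_pow_eq_mem_right
        (forall_pow_eq_mem_spectrum hp.out (hunit b) (hpow b) (hc b) hcb (hcm b))
        hy.mem_spectrum (fun h => spectrum.zero_notMem k (hunit a) (h ▸ hy.mem_spectrum))
        (by rw [hμp, spectrum.pow_eq_of_pow_eq_algebraMap (hpow a) hy.mem_spectrum])
  · obtain ⟨y, hy⟩ := exists_eigenvalue (ρ b)
    exact mem_mul_of_forall_pow_eq_mem_left
      (forall_pow_eq_mem_spectrum hp.out (hunit a) (hpow a) (hc a) hca (hcm a))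
      hy.mem_spectrum (fun h => spectrum.zero_notMem k (hunit b) (h ▸ hy.mem_spectrum))
      (by rw [hμp, spectrum.pow_eq_of_pow_eq_algebraMap (hpow b) hy.mem_spectrum])

theorem submultiplicativeSpectrum_of_isPAbelian [Finite G] {p : ℕ} [Fact p.Prime]
    (hG : IsPGroup p G) (hpab : IsPAbelian p G) : ρ.SubmultiplicativeSpectrum := by
  induction hn : Module.finrank k V using Nat.strong_induction_on generalizing G V with
  | _ n ih =>
  intro a b
  by_cases hab : Commute (ρ a) (ρ b)
  · rw [map_mul]
    exact Module.End.spectrum_mul_subset_of_commute hab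
  have : Nontrivial V := by
    contrapose! hab
    exact Subsingleton.elim _ _
  by_cases hirr : ρ.IsIrreducible
  · exact ρ.spectrum_mul_subset_of_isIrreducible hG hpab hab fun C E hE hET =>
      ih _ (hn ▸ Submodule.finrank_lt hET) _ (hG.to_subgroup C) (hpab.subgroup C) rfl
  · obtain ⟨W, hW, hW0, hWT⟩ := ρ.exists_le_comap_of_not_isIrreducible hirr
    have hWrank : Module.finrank k W ≠ 0 := by rwa [Ne, Submodule.finrank_eq_zero]
    have hWV := W.finrank_quotient_add_finrank
    exact ρ.submultiplicativeSpectrum_of_le_comap W hW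
      (ih _ (hn ▸ Submodule.finrank_lt hWT) _ hG hpab rfl)
      (ih _ (by omega) _ hG hpab rfl) a b

end Group

end Representation

theorem stmt14_general {F : Type*} [Field F] [IsAlgClosed F]
    {G : Type*} [Group G] [Finite G] (p : ℕ) (hp : p.Prime)
    (hpG : IsPGroup p G) (hpab : ∀ x y : G, (x * y) ^ p = x ^ p * y ^ p) :
    PropertyShat F G := by
  have : Fact p.Prime := ⟨hp⟩
  intro K n ρ a b
  let ρK : Representation F K (Fin n → F) :=
    (Matrix.toLinAlgEquiv' : Matrix (Fin n) (Fin n) F ≃ₐ[F] _).toMonoidHom.comp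
      ((Units.coeHom _).comp ρ)
  have hρK (g : K) : spectrum F (ρK g) = spectrum F (ρ g : Matrix (Fin n) (Fin n) F) :=
    AlgEquiv.spectrum_eq Matrix.toLinAlgEquiv' _
  have := ρK.submultiplicativeSpectrum_of_isPAbelian (hpG.to_subgroup K)
    (IsPAbelian.subgroup hpab K) a b
  rwa [hρK (a * b), hρK a, hρK b] at this

/-- Every finite `p`-abelian group has property Ŝ, where a finite
`p`-group `G` is `p`-abelian if `(x*y)^p = x^p * y^p` for all `x, y ∈ G`. -/
theorem stmt14 {F : Type*} [Field F] [IsAlgClosed F] [CharZero F]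
    {G : Type*} [Group G] [Finite G] (p : ℕ) (hp : p.Prime)
    (hpG : IsPGroup p G) (hpab : ∀ x y : G, (x * y) ^ p = x ^ p * y ^ p) :
    PropertyShat F G :=
  stmt14_general p hp hpG hpab
end

section
/- A finite 2-group has property Ŝ if and only if it is abelian. -/
/-!
Commuting matrices over an algebraically closed field have a common eigenvector inside every
eigenspace of their product, so `σ(AB) ⊆ σ(A)σ(B)`; this gives property Ŝ for abelian groups.

Conversely, a non-abelian `2`-group contains a minimal non-abelian subgroup `K`, whose maximal
subgroups are abelian, so `K` has an abelian subgroup `A` of index `2`, and some `x ∈ A` is moved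
by conjugation with some `y ∉ A`. Take a character `χ` of `A` with `χ x ≠ χ (y⁻¹ x y)` and
induce it to `K`: then `ρ x = diag(χ x, χ (y⁻¹ x y))` and `ρ y = [[0, χ (y²)], [1, 0]]`. Every
eigenvalue of `ρ (x y)` squares to `χ x · χ (y⁻¹ x y) · χ (y²)`, while the eigenvalues `t` of
`ρ y` satisfy `t² = χ (y²)`, so `σ(ρ (x y)) ⊆ σ(ρ x) σ(ρ y)` would force
`s² = χ x · χ (y⁻¹ x y)` for `s ∈ {χ x, χ (y⁻¹ x y)}`, that is `χ x = χ (y⁻¹ x y)`.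
-/

open Pointwise

namespace Module.End

variable {F V : Type*} [Field F] [IsAlgClosed F] [AddCommGroup V] [Module F V]
  [FiniteDimensional F V]

theorem exists_hasEigenvector_mem_of_mapsTo {f : End F V} {p : Submodule F V} (hp : p ≠ ⊥)
    (hf : Set.MapsTo f p p) : ∃ s, ∃ v ∈ p, f.HasEigenvector s v := by
  have : Nontrivial p := Submodule.nontrivial_iff_ne_bot.mpr hp
  obtain ⟨s, hs⟩ := exists_eigenvalue (f.restrict hf)
  obtain ⟨v, hv⟩ := hs.exists_hasEigenvector
  refine ⟨s, v, v.2, mem_eigenspace_iff.mpr ?_, by simpa using hv.2⟩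
  exact congrArg Subtype.val hv.apply_eq_smul

theorem HasEigenvalue.exists_eq_mul_of_commute {f g : End F V} (hfg : Commute f g) {μ : F}
    (hμ : (f * g).HasEigenvalue μ) :
    ∃ s t, f.HasEigenvalue s ∧ g.HasEigenvalue t ∧ μ = s * t := by
  obtain ⟨t, v, hvμ, hv⟩ := exists_hasEigenvector_mem_of_mapsTo hμ
    (mapsTo_genEigenspace_of_comm (hfg.mul_left (Commute.refl g)) μ 1)
  set p := (f * g).eigenspace μ ⊓ g.eigenspace t
  have hp : p ≠ ⊥ := (Submodule.ne_bot_iff p).mpr ⟨v, ⟨hvμ, hv.1⟩, hv.2⟩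
  have hf : Set.MapsTo f p p := fun w hw =>
    ⟨mapsTo_genEigenspace_of_comm ((Commute.refl f).mul_left hfg.symm) μ 1 hw.1,
      mapsTo_genEigenspace_of_comm hfg.symm t 1 hw.2⟩
  obtain ⟨s, u, ⟨huμ, hut⟩, hu⟩ := exists_hasEigenvector_mem_of_mapsTo hp hf
  refine ⟨s, t, hasEigenvalue_of_hasEigenvector hu, hasEigenvalue_of_hasEigenvector ⟨hut, hu.2⟩,
    smul_left_injective F hu.2 ?_⟩
  calc μ • u = f (g u) := (mem_eigenspace_iff.mp huμ).symm
    _ = (s * t) • u := by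
      rw [mem_eigenspace_iff.mp hut, map_smul, hu.apply_eq_smul, smul_smul, mul_comm]

end Module.End

theorem Matrix.spectrum_mul_subset_of_commute {F n : Type*} [Field F] [IsAlgClosed F]
    [Fintype n] [DecidableEq n] {A B : Matrix n n F} (hAB : Commute A B) :
    spectrum F (A * B) ⊆ spectrum F A * spectrum F B := by
  let e := Matrix.toLinAlgEquiv' (R := F) (n := n)
  simp only [← AlgEquiv.spectrum_eq e, map_mul]
  intro μ hμ
  obtain ⟨s, t, hs, ht, rfl⟩ := Module.End.HasEigenvalue.exists_eq_mul_of_commute (hAB.map e)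
    (Module.End.hasEigenvalue_iff_mem_spectrum.mpr hμ)
  exact Set.mul_mem_mul hs.mem_spectrum ht.mem_spectrum

namespace Matrix
variable {F : Type*} [Field F]

theorem mem_spectrum_fin_two_iff {M : Matrix (Fin 2) (Fin 2) F} {μ : F} :
    μ ∈ spectrum F M ↔ μ ^ 2 - M.trace * μ + M.det = 0 := by
  simp [mem_spectrum_iff_isRoot_charpoly, charpoly_fin_two]

theorem eq_of_spectrum_mul_subset_fin_two [IsAlgClosed F] {α α' β : F} (hα : α ≠ 0)
    (hα' : α' ≠ 0) (hβ : β ≠ 0)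
    (h : spectrum F (!![α, 0; 0, α'] * !![0, β; 1, 0]) ⊆
      spectrum F !![α, 0; 0, α'] * spectrum F !![0, β; 1, 0]) :
    α = α' := by
  obtain ⟨μ, hμ⟩ := IsAlgClosed.exists_pow_nat_eq (α * α' * β) two_pos
  have hμσ : μ ∈ spectrum F (!![α, 0; 0, α'] * !![0, β; 1, 0]) := by
    rw [mem_spectrum_fin_two_iff]
    simp [trace_fin_two, det_fin_two]
    linear_combination hμ
  obtain ⟨s, hs, t, ht, rfl⟩ := h hμσ
  rw [mem_spectrum_fin_two_iff] at hs ht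
  simp [trace_fin_two, det_fin_two] at hs ht
  have hs2 : s ^ 2 = α * α' := by
    apply mul_right_cancel₀ hβ
    linear_combination hμ - s ^ 2 * ht
  have : (s - α) * (s - α') = 0 := by linear_combination hs
  rcases mul_eq_zero.mp this with h | h
  · exact mul_left_cancel₀ hα (by linear_combination hs2 - (s + α) * h)
  · exact mul_right_cancel₀ hα' (by linear_combination -hs2 + (s + α') * h)

end Matrix

namespace Subgroup

variable {G R : Type*} [Group G] [Semiring R] (A : Subgroup G) (χ : A →* R)

open Classical in
noncomputable def extendByZero (g : G) : R := if h : g ∈ A then χ ⟨g, h⟩ else 0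

variable {A χ}

theorem extendByZero_of_mem {g : G} (hg : g ∈ A) : A.extendByZero χ g = χ ⟨g, hg⟩ :=
  dif_pos hg

theorem extendByZero_of_notMem {g : G} (hg : g ∉ A) : A.extendByZero χ g = 0 :=
  dif_neg hg

theorem extendByZero_one : A.extendByZero χ 1 = 1 :=
  (extendByZero_of_mem A.one_mem).trans χ.map_one

variable {ι : Type*} [Fintype ι] {c : ι → G}

theorem sum_extendByZero_mul_extendByZero (hc : ∀ g, ∃! i, g * c i ∈ A) (a b : G) :
    ∑ i, A.extendByZero χ (a * c i) * A.extendByZero χ ((c i)⁻¹ * b) =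
      A.extendByZero χ (a * b) := by
  obtain ⟨i, hi, hi_unique⟩ := hc a
  rw [Finset.sum_eq_single i (fun j _ hj => by rw [extendByZero_of_notMem (hj ∘ hi_unique j),
    zero_mul]) (by simp)]
  have hab : a * b = a * c i * ((c i)⁻¹ * b) := by group
  by_cases hb : (c i)⁻¹ * b ∈ A
  · rw [extendByZero_of_mem hi, extendByZero_of_mem hb, ← map_mul, hab,
      extendByZero_of_mem (A.mul_mem hi hb)]
    rfl
  · rw [extendByZero_of_notMem hb, mul_zero, hab,
      extendByZero_of_notMem fun h => hb ((A.mul_mem_cancel_left hi).mp h)]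

/-- The representation induced from `χ`, written in the basis given by the transversal `c`
(`hc` says that `c` meets every left coset of `A` exactly once). -/
noncomputable def monomialRep (χ : A →* R) [DecidableEq ι] (hc : ∀ g, ∃! i, g * c i ∈ A) :
    G →* Matrix ι ι R where
  toFun g := Matrix.of fun i j => A.extendByZero χ ((c i)⁻¹ * g * c j)
  map_one' := by
    ext i j
    rw [Matrix.of_apply, mul_one, Matrix.one_apply]
    split_ifs with hij
    · rw [hij, inv_mul_cancel, extendByZero_one]
    · refine extendByZero_of_notMem fun h => hij ?_
      obtain ⟨k, -, hk⟩ := hc (c i)⁻¹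
      exact (hk i (by simp)).trans (hk j h).symm
  map_mul' g h := by
    ext i j
    simp only [Matrix.mul_apply, Matrix.of_apply]
    rw [show (c i)⁻¹ * (g * h) * c j = (c i)⁻¹ * g * (h * c j) by group,
      ← sum_extendByZero_mul_extendByZero hc]
    simp only [mul_assoc]

theorem existsUnique_mul_mem_of_index_eq_two (hA : A.index = 2) {y : G} (hy : y ∉ A) (g : G) :
    ∃! i, g * ![1, y] i ∈ A := by
  by_cases hg : g ∈ A
  · refine ⟨0, by simpa using hg, fun i hi => ?_⟩
    fin_cases i
    · rfl
    · exact absurd ((A.mul_mem_cancel_left hg).mp hi) hy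
  · refine ⟨1, (mul_mem_iff_of_index_two hA).mpr (iff_of_false hg hy), fun i hi => ?_⟩
    fin_cases i
    · exact absurd (by simpa using hi) hg
    · rfl

section IndexTwo

variable {y : G} (hc : ∀ g, ∃! i, g * ![1, y] i ∈ A)
include hc

theorem monomialRep_of_mem (hy : y ∉ A) {x : G} (hx : x ∈ A) :
    A.monomialRep χ hc x = !![A.extendByZero χ x, 0; 0, A.extendByZero χ (y⁻¹ * x * y)] := by
  have hxy : x * y ∉ A := fun h => hy ((A.mul_mem_cancel_left hx).mp h)
  have hyx : y⁻¹ * x ∉ A := fun h =>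
    hy (by simpa using A.inv_mem ((A.mul_mem_cancel_right hx).mp h))
  ext i j
  fin_cases i <;> fin_cases j <;>
    simp [monomialRep, extendByZero_of_notMem hxy, extendByZero_of_notMem hyx]

theorem monomialRep_of_notMem (hy : y ∉ A) :
    A.monomialRep χ hc y = !![0, A.extendByZero χ (y * y); 1, 0] := by
  ext i j
  fin_cases i <;> fin_cases j <;>
    simp [monomialRep, extendByZero_of_notMem hy, extendByZero_one]

end IndexTwo

end Subgroup

open Subgroup in
theorem IsPGroup.exists_index_eq {p : ℕ} [Fact p.Prime] {G : Type*} [Group G] [Finite G]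
    [Nontrivial G] (hG : IsPGroup p G) : ∃ A : Subgroup G, A.index = p := by
  obtain ⟨n, hn⟩ := hG.exists_card_eq
  obtain ⟨m, rfl⟩ : ∃ m, n = m + 1 := Nat.exists_eq_succ_of_ne_zero fun h0 => by
    simpa [hn, h0] using Finite.one_lt_card (α := G)
  obtain ⟨A, hA⟩ := Sylow.exists_subgroup_card_pow_prime p (hn ▸ pow_dvd_pow p m.le_succ)
  refine ⟨A, Nat.eq_of_mul_eq_mul_left (pow_pos (Fact.out : p.Prime).pos m) ?_⟩
  rw [← hA, card_mul_index, hn, hA, pow_succ]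

namespace Subgroup

variable {G : Type*} [Group G]

theorem exists_minimal_not_isMulCommutative [Finite G] (hG : ¬IsMulCommutative G) :
    ∃ K : Subgroup G, ¬IsMulCommutative K ∧ ∀ H : Subgroup K, H ≠ ⊤ → IsMulCommutative H := by
  have htop : ¬IsMulCommutative (⊤ : Subgroup G) := fun h => hG <| isMulCommutative_iff.mpr
    fun a b => setLike_mul_comm (s := (⊤ : Subgroup G)) (mem_top a) (mem_top b)
  obtain ⟨K, hK⟩ :=
    exists_minimal_of_wellFoundedLT (fun K : Subgroup G => ¬IsMulCommutative K) ⟨⊤, htop⟩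
  refine ⟨K, hK.prop, fun H hH => ?_⟩
  have hlt : H.map K.subtype < K := by
    simpa [← MonoidHom.range_eq_map] using map_subtype_lt_map_subtype.mpr hH.lt_top
  have : IsMulCommutative (H.map K.subtype) := not_not.mp (hK.not_prop_of_lt hlt)
  exact isMulCommutative_iff.mpr fun a b => Subtype.ext <| Subtype.ext <|
    setLike_mul_comm (mem_map_of_mem K.subtype a.2) (mem_map_of_mem K.subtype b.2)

theorem exists_conj_ne_of_index_eq_two {A : Subgroup G} (hA : A.index = 2) [IsMulCommutative A]
    (hG : ¬IsMulCommutative G) : ∃ x ∈ A, ∃ y ∉ A, y⁻¹ * x * y ≠ x := by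
  by_contra! h
  obtain ⟨y, hy, -⟩ := index_eq_two_iff_exists_notMem_and.mp hA
  have hcomm : ∀ a ∈ (A : Set G) ∪ {y}, ∀ b ∈ (A : Set G) ∪ {y}, a * b = b * a := by
    have hxy : ∀ x ∈ A, x * y = y * x := fun x hx =>
      calc x * y = y * (y⁻¹ * x * y) := by group
        _ = y * x := by rw [h x hx y hy]
    rintro a (ha | rfl) b (hb | rfl)
    exacts [setLike_mul_comm ha hb, hxy a ha, (hxy b hb).symm, rfl]
  have hgen : closure ((A : Set G) ∪ {y}) = ⊤ := by
    refine eq_top_iff' _ |>.mpr fun g => ?_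
    by_cases hg : g ∈ A
    · exact subset_closure (Or.inl hg)
    · have hgy : g * y⁻¹ ∈ A := (mul_mem_iff_of_index_two hA).mpr
        (iff_of_false hg (by simpa using hy))
      have h₁ : g * y⁻¹ ∈ closure ((A : Set G) ∪ {y}) := subset_closure (Or.inl hgy)
      have h₂ : y ∈ closure ((A : Set G) ∪ {y}) := subset_closure (Or.inr rfl)
      simpa using mul_mem h₁ h₂
  have := isMulCommutative_closure hcomm
  exact hG <| isMulCommutative_iff.mpr fun a b =>
    setLike_mul_comm (s := closure ((A : Set G) ∪ {y})) (hgen ▸ mem_top a) (hgen ▸ mem_top b)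

end Subgroup

theorem IsPGroup.exists_isMulCommutative_index_eq {p : ℕ} [Fact p.Prime] {G : Type*} [Group G]
    [Finite G] (hG : IsPGroup p G) (hG' : ¬IsMulCommutative G) :
    ∃ K : Subgroup G, ¬IsMulCommutative K ∧
      ∃ A : Subgroup K, A.index = p ∧ IsMulCommutative A := by
  obtain ⟨K, hK, hmin⟩ := Subgroup.exists_minimal_not_isMulCommutative hG'
  have : Nontrivial K := by
    by_contra h
    have := not_nontrivial_iff_subsingleton.mp h
    exact hK (isMulCommutative_iff.mpr fun a b => Subsingleton.elim _ _)
  obtain ⟨A, hA⟩ := (hG.to_subgroup K).exists_index_eq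
  refine ⟨K, hK, A, hA, hmin A fun h => ?_⟩
  simp [h, (Fact.out : p.Prime).ne_one.symm] at hA

section Spectrum

variable {F K ι : Type*} [Field F] [Monoid K] [Fintype ι] [DecidableEq ι]

def HasSubmultiplicativeSpectrum (ρ : K →* GL ι F) : Prop :=
  ∀ a b : K, spectrum F (ρ (a * b) : Matrix ι ι F) ⊆
    spectrum F (ρ a : Matrix ι ι F) * spectrum F (ρ b : Matrix ι ι F)

theorem hasSubmultiplicativeSpectrum_of_isMulCommutative [IsAlgClosed F] [IsMulCommutative K]
    (ρ : K →* GL ι F) : HasSubmultiplicativeSpectrum ρ := fun a b => by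
  rw [map_mul, Units.val_mul]
  exact Matrix.spectrum_mul_subset_of_commute
    ((show Commute a b from mul_comm' a b).map ρ).units_val

end Spectrum

open IsMulCommutative in
theorem exists_not_hasSubmultiplicativeSpectrum_of_index_eq_two {F K : Type*} [Field F]
    [IsAlgClosed F] [CharZero F] [Group K] [Finite K] {A : Subgroup K} (hA : A.index = 2)
    [IsMulCommutative A] (hK : ¬IsMulCommutative K) :
    ∃ ρ : K →* GL (Fin 2) F, ¬HasSubmultiplicativeSpectrum ρ := by
  obtain ⟨x, hx, y, hy, hxy⟩ := Subgroup.exists_conj_ne_of_index_eq_two hA hK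
  have hx' : y⁻¹ * x * y ∈ A := by
    simpa using (Subgroup.normal_of_index_eq_two hA).conj_mem x hx y⁻¹
  obtain ⟨χ, hχ⟩ : ∃ χ : A →* Fˣ, χ ⟨x, hx⟩ ≠ χ ⟨y⁻¹ * x * y, hx'⟩ := by
    have : NeZero (Monoid.exponent A : F) :=
      ⟨Nat.cast_ne_zero.mpr Monoid.exponent_ne_zero_of_finite⟩
    by_contra! h
    exact hxy (Subtype.ext_iff.mp ((CommGroup.forall_apply_eq_apply_iff A).mp h)).symm
  set ψ := (Units.coeHom F).comp χ
  have hψ : ∀ {g} (hg : g ∈ A), A.extendByZero ψ g ≠ 0 := fun hg => by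
    simp [Subgroup.extendByZero_of_mem hg, ψ]
  have hc := Subgroup.existsUnique_mul_mem_of_index_eq_two hA hy
  refine ⟨(A.monomialRep ψ hc).toHomUnits, fun h => hχ (Units.ext ?_)⟩
  have := h x y
  simp only [map_mul, Units.val_mul, MonoidHom.coe_toHomUnits,
    Subgroup.monomialRep_of_mem hc hy hx, Subgroup.monomialRep_of_notMem hc hy] at this
  have hxx' := Matrix.eq_of_spectrum_mul_subset_fin_two (hψ hx) (hψ hx')
    (hψ (Subgroup.mul_self_mem_of_index_two hA y)) this
  rwa [Subgroup.extendByZero_of_mem hx, Subgroup.extendByZero_of_mem hx'] at hxx'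

/-- A finite `2`-group has property Ŝ if and only if it is abelian. -/
theorem stmt15 {F : Type*} [Field F] [IsAlgClosed F] [CharZero F]
    {G : Type*} [Group G] [Finite G] (hpG : IsPGroup 2 G) :
    PropertyShat F G ↔ ∀ x y : G, x * y = y * x := by
  rw [← isMulCommutative_iff]
  refine ⟨fun hS => ?_, fun _ K n ρ => hasSubmultiplicativeSpectrum_of_isMulCommutative ρ⟩
  by_contra hG
  have : Fact (Nat.Prime 2) := ⟨Nat.prime_two⟩
  obtain ⟨K, hK, A, hA, _⟩ := hpG.exists_isMulCommutative_index_eq hG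
  obtain ⟨ρ, hρ⟩ := exists_not_hasSubmultiplicativeSpectrum_of_index_eq_two (F := F) hA hK
  exact hρ (hS K 2 ρ)
end

section
/- For every prime p, positive integers k and i with 1 ≤ i ≤ p−2, and η a p^k-th root of unity in F, the diagonal matrix D_k(i,η) ∈ GL_{p^k}(F) with diagonal entries η^{C(j,i)} for j = 0, 1, ..., p^k − 1 has determinant 1, where C(j,i) is the binomial coefficient (taken as 0 when j < i). -/
open Finset

theorem Nat.sum_range_choose_eq_choose_succ (n i : ℕ) :
    ∑ j ∈ range n, j.choose i = n.choose (i + 1) := by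
  induction n with
  | zero => simp
  | succ n ih => rw [sum_range_succ, ih, choose_succ_succ', add_comm]

/-- From `m * C(n, m) = n * C(n - 1, m - 1)`. -/
theorem Nat.Coprime.dvd_choose {n m : ℕ} (hm : 0 < m) (h : n.Coprime m) : n ∣ n.choose m := by
  obtain _ | n := n
  · simp [Nat.choose_eq_zero_of_lt hm]
  obtain _ | m := m
  · omega
  exact h.dvd_of_dvd_mul_right ⟨_, (Nat.add_one_mul_choose_eq n m).symm⟩

theorem stmt17_general {F : Type*} [Field F]
    (p k i : ℕ) (hp : p.Prime) (hip : i ≤ p - 2)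
    (η : F) (hη : η ^ (p ^ k) = 1) :
    (Matrix.diagonal fun j : Fin (p ^ k) => η ^ ((j : ℕ).choose i)).det = 1 := by
  have hi_lt : i + 1 < p := by have := hp.two_le; omega
  have hcop : (p ^ k).Coprime (i + 1) :=
    (hp.coprime_iff_not_dvd.2 (Nat.not_dvd_of_pos_of_lt i.succ_pos hi_lt)).pow_left k
  obtain ⟨m, hm⟩ := hcop.dvd_choose i.succ_pos
  rw [Matrix.det_diagonal, prod_pow_eq_pow_sum, Fin.sum_univ_eq_sum_range (·.choose i),
    Nat.sum_range_choose_eq_choose_succ, hm, pow_mul, hη, one_pow]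

/-- For a prime `p`, positive integers `k` and `i` with `1 ≤ i ≤ p - 2`,
and `η` a `p^k`-th root of unity in `F`, the diagonal matrix `D_k(i, η) ∈ GL_{p^k}(F)`
with diagonal entries `η^(C(j, i))` for `j = 0, 1, …, p^k - 1` has determinant `1`. -/
theorem stmt17 {F : Type*} [Field F] [IsAlgClosed F] [CharZero F]
    (p k i : ℕ) (hp : p.Prime) (hk : 1 ≤ k) (hi : 1 ≤ i) (hip : i ≤ p - 2)
    (η : F) (hη : η ^ (p ^ k) = 1) :
    (Matrix.diagonal fun j : Fin (p ^ k) => η ^ ((j : ℕ).choose i)).det = 1 :=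
  stmt17_general p k i hp hip η hη
end
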